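/- For every n ≥ 1, the function R_n attains its maximum over the cube [0, 1/2]^n at a point p* whose coordinates take at most one value in the open interval (0, 1/2); that is, there exist a maximizer p* of R_n on [0,1/2]^n and a number u ∈ (0,1/2) such that every coordinate of p* lies in the set {0, u, 1/2}. -/

import Mathlib

/-- `F(m) = C(m, ⌊m/2⌋) · 2^{−m}`. -/
noncomputable def F' (m : ℕ) : ℝ := (m.choose (m / 2) : ℝ) / 2 ^ m

/-- `E_n(p) = Σ_{A ⊆ {1,…,n}} F(|A|) ∏_{i∈A} p_i ∏_{i∉A} (1−p_i)`, the expectation of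
`F` at a sum of independent Bernoulli(`p_i`) variables. -/
noncomputable def En {n : ℕ} (p : Fin n → ℝ) : ℝ :=
  ∑ A ∈ (Finset.univ : Finset (Fin n)).powerset,
    F' A.card * ((∏ i ∈ A, p i) * ∏ i ∈ Aᶜ, (1 - p i))

/-- `R_n(p) = √(p_1 + ⋯ + p_n) · E_n(p)`. -/
noncomputable def Rn {n : ℕ} (p : Fin n → ℝ) : ℝ := Real.sqrt (∑ i, p i) * En p

/-!
By compactness `Rn` has maximizers on the cube; among them take `p` maximizing `∑ k, p k ^ 2`.
Since `En` is affine in each coordinate and symmetric, moving along `p i + p j = t` (which keeps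
`∑ k, p k` fixed) changes `Rn` only through a term `C · p i · p j`. If `C > 0`, equalizing `p i`
and `p j` increases `Rn` unless they are already equal; if `C ≤ 0`, pushing one of them to the
boundary does not decrease `Rn` but strictly increases `∑ k, p k ^ 2`. So any two coordinates
in `(0, 1/2)` coincide.
-/

open Function Finset

lemma En_update {n : ℕ} (p : Fin n → ℝ) (i : Fin n) (x : ℝ) :
    En (update p i x) = (1 - x) * En (update p i 0) + x * En (update p i 1) := by
  have hcompl (z : ℝ) : (fun k => 1 - update p i z k) = update (fun k => 1 - p k) i (1 - z) := by
    funext k; exact apply_update (fun _ (y : ℝ) => 1 - y) p i z k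
  simp only [En, hcompl, mul_sum, ← sum_add_distrib]
  refine sum_congr rfl fun A _ => ?_
  by_cases hiA : i ∈ A
  · have hiAc : i ∉ Aᶜ := by simpa using hiA
    simp only [prod_update_of_mem hiA, prod_update_of_notMem hiAc]; ring
  · have hiAc : i ∈ Aᶜ := by simpa using hiA
    simp only [prod_update_of_mem hiAc, prod_update_of_notMem hiA]; ring

lemma En_comp_perm {n : ℕ} (p : Fin n → ℝ) (σ : Equiv.Perm (Fin n)) : En (p ∘ σ) = En p := by
  rw [En, En, powerset_univ]
  refine Fintype.sum_equiv σ.finsetCongr _ _ fun A => ?_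
  have hcompl : (σ.finsetCongr A)ᶜ = σ.finsetCongr Aᶜ := by
    ext b; simp [Equiv.finsetCongr_apply, mem_map_equiv]
  rw [hcompl]
  simp only [Equiv.finsetCongr_apply, card_map, prod_map]
  rfl

lemma exists_En_update_update_eq {n : ℕ} (p : Fin n → ℝ) {i j : Fin n} (hij : i ≠ j) :
    ∃ a b c : ℝ, ∀ x y, En (update (update p i x) j y) = a + b * (x + y) + c * (x * y) := by
  set Φ : ℝ → ℝ → ℝ := fun x y => En (update (update p i x) j y)
  have hsymm : Φ 0 1 = Φ 1 0 := by
    have hswap : update (update p i 1) j 0 ∘ Equiv.swap i j = update (update p i 0) j 1 := by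
      funext k
      rcases eq_or_ne k i with rfl | hki
      · simp [hij]
      rcases eq_or_ne k j with rfl | hkj
      · simp [hij]
      · simp [Equiv.swap_apply_of_ne_of_ne hki hkj, hki, hkj]
    simp only [Φ, ← hswap, En_comp_perm]
  refine ⟨Φ 0 0, Φ 1 0 - Φ 0 0, Φ 1 1 - 2 * Φ 1 0 + Φ 0 0, fun x y => ?_⟩
  have hi (y : ℝ) : Φ x y = (1 - x) * Φ 0 y + x * Φ 1 y := by
    have hcomm (z : ℝ) : Φ z y = En (update (update p j y) i z) := by
      rw [update_comm (β := fun _ => ℝ) hij.symm]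
    rw [hcomm, hcomm, hcomm]; exact En_update _ i x
  have hj (x : ℝ) : Φ x y = (1 - y) * Φ x 0 + y * Φ x 1 := En_update _ j y
  show Φ x y = _
  rw [hi, hj 0, hj 1, hsymm]; ring

section Rebalance

variable {ι : Type*} [DecidableEq ι]

lemma sum_comp_update [Fintype ι] {M : Type*} [AddCommGroup M] (g : ℝ → M) (p : ι → ℝ) (i : ι) (x : ℝ) :
    ∑ k, g (update p i x k) = ∑ k, g (p k) - g (p i) + g x := by
  rw [← add_sum_erase _ _ (mem_univ i), ← add_sum_erase _ (fun k => g (p k)) (mem_univ i),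
    update_self, sum_congr rfl fun k hk => by rw [update_of_ne (ne_of_mem_erase hk)]]
  abel

def rebalance (p : ι → ℝ) (i j : ι) (x : ℝ) : ι → ℝ :=
  update (update p i x) j (p i + p j - x)

lemma rebalance_self (p : ι → ℝ) (i j : ι) : rebalance p i j (p i) = p := by
  simp [rebalance]

lemma sum_comp_rebalance [Fintype ι] {M : Type*} [AddCommGroup M] (g : ℝ → M) (p : ι → ℝ) {i j : ι}
    (hij : i ≠ j) (x : ℝ) :
    ∑ k, g (rebalance p i j x k) =
      ∑ k, g (p k) - g (p i) - g (p j) + g x + g (p i + p j - x) := by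
  rw [rebalance, sum_comp_update, sum_comp_update, update_of_ne hij.symm]
  abel

lemma sum_rebalance [Fintype ι] (p : ι → ℝ) {i j : ι} (hij : i ≠ j) (x : ℝ) :
    ∑ k, rebalance p i j x k = ∑ k, p k := by
  linear_combination sum_comp_rebalance (fun y : ℝ => y) p hij x

lemma sum_sq_rebalance [Fintype ι] (p : ι → ℝ) {i j : ι} (hij : i ≠ j) (x : ℝ) :
    ∑ k, rebalance p i j x k ^ 2 = ∑ k, p k ^ 2 + 2 * (p i * p j - x * (p i + p j - x)) := by
  rw [sum_comp_rebalance (· ^ 2) p hij]; ring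

lemma rebalance_mem_pi {s : Set ℝ} {p : ι → ℝ} (hp : ∀ k, p k ∈ s) {i j : ι} {x : ℝ}
    (hx : x ∈ s) (hx' : p i + p j - x ∈ s) (k : ι) : rebalance p i j x k ∈ s := by
  unfold rebalance
  rcases eq_or_ne k j with rfl | hkj
  · rwa [update_self]
  rcases eq_or_ne k i with rfl | hki
  · rwa [update_of_ne hkj, update_self]
  · rw [update_of_ne hkj, update_of_ne hki]; exact hp k

end Rebalance

lemma exists_Rn_rebalance_eq {n : ℕ} (p : Fin n → ℝ) {i j : Fin n} (hij : i ≠ j) :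
    ∃ A C : ℝ, ∀ x, Rn (rebalance p i j x) = A + C * (x * (p i + p j - x)) := by
  obtain ⟨a, b, c, hEn⟩ := exists_En_update_update_eq p hij
  refine ⟨√(∑ k, p k) * (a + b * (p i + p j)), √(∑ k, p k) * c, fun x => ?_⟩
  rw [Rn, sum_rebalance p hij, rebalance, hEn]
  ring

theorem IsCompact.exists_isMaxOn_isMaxOn_inter_preimage {α β γ : Type*} [TopologicalSpace α]
    [TopologicalSpace β] [LinearOrder β] [OrderClosedTopology β]
    [TopologicalSpace γ] [LinearOrder γ] [ClosedIciTopology γ]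
    {K : Set α} (hK : IsCompact K) (hne : K.Nonempty) {f : α → β} {g : α → γ}
    (hf : Continuous f) (hg : ContinuousOn g K) :
    ∃ p ∈ K, IsMaxOn f K p ∧ IsMaxOn g (K ∩ f ⁻¹' {f p}) p := by
  obtain ⟨p₀, hp₀, hmax₀⟩ := hK.exists_isMaxOn hne hf.continuousOn
  have hK' : IsCompact (K ∩ f ⁻¹' {f p₀}) := hK.inter_right (isClosed_singleton.preimage hf)
  obtain ⟨p, ⟨hpK, hfp⟩, hmax⟩ :=
    hK'.exists_isMaxOn ⟨p₀, hp₀, rfl⟩ (hg.mono Set.inter_subset_left)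
  rw [Set.mem_preimage, Set.mem_singleton_iff] at hfp
  exact ⟨p, hpK, fun x hx => (hmax₀ hx).trans hfp.ge, by rwa [hfp]⟩

lemma exists_forall_mem_insert_of_pairwise_eq {ι α : Type*} [LinearOrder α] [DenselyOrdered α]
    {a b : α} (hab : a < b) {p : ι → α} (hp : ∀ k, p k ∈ Set.Icc a b)
    (h : ∀ i j, p i ∈ Set.Ioo a b → p j ∈ Set.Ioo a b → p i = p j) :
    ∃ u ∈ Set.Ioo a b, ∀ k, p k ∈ ({a, u, b} : Set α) := by
  obtain ⟨u, hu, hpu⟩ : ∃ u ∈ Set.Ioo a b, ∀ k, p k ∈ Set.Ioo a b → p k = u := by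
    by_cases hex : ∃ i, p i ∈ Set.Ioo a b
    · obtain ⟨i, hi⟩ := hex
      exact ⟨p i, hi, fun k hk => h k i hk hi⟩
    · push Not at hex
      obtain ⟨u, hu⟩ := exists_between hab
      exact ⟨u, hu, fun k hk => absurd hk (hex k)⟩
  refine ⟨u, hu, fun k => ?_⟩
  rcases (hp k).1.eq_or_lt with hka | hka
  · exact Or.inl hka.symm
  rcases (hp k).2.eq_or_lt with hkb | hkb
  · exact Or.inr (Or.inr hkb)
  · exact Or.inr (Or.inl (hpu k ⟨hka, hkb⟩))

def cube (n : ℕ) : Set (Fin n → ℝ) := {p | ∀ i, p i ∈ Set.Icc 0 (1 / 2)}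

lemma isCompact_cube (n : ℕ) : IsCompact (cube n) := by
  simpa [cube, Set.pi] using
    isCompact_univ_pi fun _ : Fin n => isCompact_Icc (a := (0 : ℝ)) (b := 1 / 2)

lemma continuous_En (n : ℕ) : Continuous (En (n := n)) := by
  unfold En
  fun_prop

lemma continuous_Rn (n : ℕ) : Continuous (Rn (n := n)) := by
  have := continuous_En n
  unfold Rn
  fun_prop

theorem eq_of_mem_Ioo_of_isMaxOn {n : ℕ} {p : Fin n → ℝ} (hp : p ∈ cube n)
    (hmax : IsMaxOn Rn (cube n) p)
    (htie : IsMaxOn (fun q => ∑ k, q k ^ 2) (cube n ∩ Rn ⁻¹' {Rn p}) p) {i j : Fin n}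
    (hi : p i ∈ Set.Ioo 0 (1 / 2)) (hj : p j ∈ Set.Ioo 0 (1 / 2)) : p i = p j := by
  by_contra hne
  have hij : i ≠ j := fun h => hne (h ▸ rfl)
  obtain ⟨A, C, hR⟩ := exists_Rn_rebalance_eq p hij
  have hRp : Rn p = A + C * (p i * p j) := by simpa [rebalance_self] using hR (p i)
  obtain ⟨hi0, hi1⟩ := hi
  obtain ⟨hj0, hj1⟩ := hj
  rcases le_or_gt C 0 with hC | hC
  · set L := max 0 (p i + p j - 1 / 2)
    have hL0 : 0 ≤ L := le_max_left _ _
    have hL1 : p i + p j - 1 / 2 ≤ L := le_max_right _ _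
    have hLi : L < p i := max_lt hi0 (by linarith)
    have hLj : L < p j := max_lt hj0 (by linarith)
    have hq : rebalance p i j L ∈ cube n :=
      rebalance_mem_pi hp ⟨hL0, by linarith⟩ ⟨by linarith, by linarith⟩
    have hgap : L * (p i + p j - L) < p i * p j := by nlinarith
    have hRq : Rn p ≤ Rn (rebalance p i j L) := by rw [hR, hRp]; nlinarith
    have hsq : ∑ k, rebalance p i j L k ^ 2 ≤ ∑ k, p k ^ 2 := htie ⟨hq, le_antisymm (hmax hq) hRq⟩
    rw [sum_sq_rebalance p hij] at hsq
    linarith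
  · have hq : rebalance p i j ((p i + p j) / 2) ∈ cube n :=
      rebalance_mem_pi hp ⟨by linarith, by linarith⟩ ⟨by linarith, by linarith⟩
    have hgap : p i * p j < (p i + p j) / 2 * (p i + p j - (p i + p j) / 2) := by
      nlinarith [sq_pos_of_ne_zero (sub_ne_zero.2 hne)]
    have hRq : Rn (rebalance p i j ((p i + p j) / 2)) ≤ Rn p := hmax hq
    rw [hR, hRp] at hRq
    nlinarith

theorem Rn_max_at_three_valued_point (n : ℕ) :
    ∃ p : Fin n → ℝ, (∀ i, p i ∈ Set.Icc (0:ℝ) (1/2)) ∧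
      (∀ q : Fin n → ℝ, (∀ i, q i ∈ Set.Icc (0:ℝ) (1/2)) → Rn q ≤ Rn p) ∧
      ∃ u : ℝ, u ∈ Set.Ioo (0:ℝ) (1/2) ∧ ∀ i, p i ∈ ({0, u, 1/2} : Set ℝ) := by
  obtain ⟨p, hp, hmax, htie⟩ :=
    (isCompact_cube n).exists_isMaxOn_isMaxOn_inter_preimage ⟨0, fun _ => by norm_num⟩
      (continuous_Rn n) (g := fun q => ∑ k, q k ^ 2) (by fun_prop)
  exact ⟨p, hp, fun q hq => hmax hq, exists_forall_mem_insert_of_pairwise_eq (by norm_num) hp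
    fun i j hi hj => eq_of_mem_Ioo_of_isMaxOn hp hmax htie hi hj⟩
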